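/- arXiv:math/0112061 — 3 statements merged into one kernel-verified Lean document; each statement's English description precedes it below -/
import Mathlib

section
/- Applying the exterior differential d (graded Leibniz rule, d even variables have parity 0 and odd ones parity 1) to the quantum superplane relations xθ - qθx = 0 and θ² = 0, with the ansatz x·dθ = F₁₁ dθ·x + F₁₂ dx·θ, θ·dx = F₂₁ dx·θ + F₂₂ dθ·x, θ·dθ = B dθ·θ, forces the coefficient conditions F₁₁ + q F₂₂ = q, F₁₂ + q F₂₁ = -1, and B = 1. -/
/- STATEMENT 0: Applying the exterior differential d (graded Leibniz rule) to the
quantum superplane relations xθ - qθx = 0 and θ² = 0, with the ansatz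
x·dθ = F₁₁ dθ·x + F₁₂ dx·θ, θ·dx = F₂₁ dx·θ + F₂₂ dθ·x, θ·dθ = B dθ·θ,
forces F₁₁ + q F₂₂ = q, F₁₂ + q F₂₁ = -1, B = 1.

We model the superplane with its first-order calculus ansatz as the quotient of the
free algebra on x = ι 0, θ = ι 1, dx = ι 2, dθ = ι 3 by the superplane relations (1)
and the ansatz relations (2).  The consequences of applying d are
d(xθ) = q·d(θx), i.e. dx·θ + x·dθ = q(dθ·x - θ·dx)  (x even, θ odd), and
d(θ·θ) = 0, i.e. dθ·θ - θ·dθ = 0. -/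

noncomputable section

open FreeAlgebra

/-- The defining relations of the quantum superplane together with the
linear ansatz for the commutation of coordinates and differentials. -/
inductive SRel (q A B F11 F12 F21 F22 : ℂ) :
    FreeAlgebra ℂ (Fin 4) → FreeAlgebra ℂ (Fin 4) → Prop
  | plane : SRel q A B F11 F12 F21 F22 (ι ℂ 0 * ι ℂ 1) (q • (ι ℂ 1 * ι ℂ 0))
  | nilp : SRel q A B F11 F12 F21 F22 (ι ℂ 1 * ι ℂ 1) 0
  | xdx : SRel q A B F11 F12 F21 F22 (ι ℂ 0 * ι ℂ 2) (A • (ι ℂ 2 * ι ℂ 0))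
  | xdth : SRel q A B F11 F12 F21 F22 (ι ℂ 0 * ι ℂ 3)
      (F11 • (ι ℂ 3 * ι ℂ 0) + F12 • (ι ℂ 2 * ι ℂ 1))
  | thdx : SRel q A B F11 F12 F21 F22 (ι ℂ 1 * ι ℂ 2)
      (F21 • (ι ℂ 2 * ι ℂ 1) + F22 • (ι ℂ 3 * ι ℂ 0))
  | thdth : SRel q A B F11 F12 F21 F22 (ι ℂ 1 * ι ℂ 3) (B • (ι ℂ 3 * ι ℂ 1))

/-- The algebra generated by x, θ, dx, dθ with the superplane and ansatz relations. -/
abbrev SPlane (q A B F11 F12 F21 F22 : ℂ) := RingQuot (SRel q A B F11 F12 F21 F22)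

/-- The canonical projection. -/
abbrev sπ (q A B F11 F12 F21 F22 : ℂ) :
    FreeAlgebra ℂ (Fin 4) →ₐ[ℂ] SPlane q A B F11 F12 F21 F22 :=
  RingQuot.mkAlgHom ℂ (SRel q A B F11 F12 F21 F22)

/-! Rewriting `x·dθ`, `θ·dx` and `θ·dθ` by the ansatz turns the two differentiated relations into
`(1 + F₁₂ + q F₂₁) dx·θ + (F₁₁ + q F₂₂ - q) dθ·x = 0` and `(1 - B) dθ·θ = 0`. The monomials
`dx·θ`, `dθ·x`, `dθ·θ` are linearly independent, as a representation of the algebra on a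
truncation of its quadratic part shows, so all three coefficients vanish. -/

open Matrix

namespace SPlane

variable (q A B F11 F12 F21 F22 : ℂ)

local notation "𝐱" => sπ q A B F11 F12 F21 F22 (ι ℂ 0)
local notation "θ" => sπ q A B F11 F12 F21 F22 (ι ℂ 1)
local notation "d𝐱" => sπ q A B F11 F12 F21 F22 (ι ℂ 2)
local notation "dθ" => sπ q A B F11 F12 F21 F22 (ι ℂ 3)

/-- Left multiplication by the generators on the span of `1, x, θ, dx, dθ, dx·θ, dθ·x, dθ·θ`
(indices `0, …, 7`), the other quadratic monomials and everything of degree three being set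
to zero. -/
def truncatedRep : Fin 4 → Matrix (Fin 8) (Fin 8) ℂ
  | 0 => single 1 0 1 + single 6 4 F11 + single 5 4 F12
  | 1 => single 2 0 1 + single 5 3 F21 + single 6 3 F22 + single 7 4 B
  | 2 => single 3 0 1 + single 5 2 1
  | 3 => single 4 0 1 + single 6 1 1 + single 7 2 1

theorem truncatedRep_respects_sRel ⦃a b : FreeAlgebra ℂ (Fin 4)⦄
    (h : SRel q A B F11 F12 F21 F22 a b) :
    lift ℂ (truncatedRep B F11 F12 F21 F22) a = lift ℂ (truncatedRep B F11 F12 F21 F22) b := by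
  cases h <;>
    simp [truncatedRep, add_mul, mul_add, single_mul_single_same, single_mul_single_of_ne]

def truncatedRepHom : SPlane q A B F11 F12 F21 F22 →ₐ[ℂ] Matrix (Fin 8) (Fin 8) ℂ :=
  RingQuot.liftAlgHom ℂ
    ⟨lift ℂ (truncatedRep B F11 F12 F21 F22), truncatedRep_respects_sRel q A B F11 F12 F21 F22⟩

theorem truncatedRepHom_sπ_ι (i : Fin 4) :
    truncatedRepHom q A B F11 F12 F21 F22 (sπ q A B F11 F12 F21 F22 (ι ℂ i)) =
      truncatedRep B F11 F12 F21 F22 i := by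
  simp [truncatedRepHom]

theorem linearIndependent_dxθ_dθx_dθθ :
    LinearIndependent ℂ ![d𝐱 * θ, dθ * 𝐱, dθ * θ] := by
  refine LinearIndependent.of_comp (truncatedRepHom q A B F11 F12 F21 F22).toLinearMap ?_
  rw [Fintype.linearIndependent_iff]
  intro c hc
  have hentry (k : Fin 8) := congrFun (congrFun hc k) 0
  simp only [AlgHom.coe_toLinearMap, Function.comp_apply, Fin.sum_univ_three, cons_val_zero,
    cons_val_one, cons_val, map_mul, truncatedRepHom_sπ_ι, truncatedRep, mul_add, add_mul, ne_eq,
    Fin.reduceEq, not_false_eq_true, single_mul_single_of_ne, single_mul_single_same, mul_one,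
    zero_add, add_zero, smul_single, smul_eq_mul, Matrix.add_apply, Matrix.zero_apply] at hentry
  intro i
  fin_cases i
  exacts [by simpa using hentry 5, by simpa using hentry 6, by simpa using hentry 7]

theorem x_mul_dθ : 𝐱 * dθ = F11 • (dθ * 𝐱) + F12 • (d𝐱 * θ) := by
  simpa using RingQuot.mkAlgHom_rel ℂ (SRel.xdth : SRel q A B F11 F12 F21 F22 _ _)

theorem θ_mul_dx : θ * d𝐱 = F21 • (d𝐱 * θ) + F22 • (dθ * 𝐱) := by
  simpa using RingQuot.mkAlgHom_rel ℂ (SRel.thdx : SRel q A B F11 F12 F21 F22 _ _)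

theorem θ_mul_dθ : θ * dθ = B • (dθ * θ) := by
  simpa using RingQuot.mkAlgHom_rel ℂ (SRel.thdth : SRel q A B F11 F12 F21 F22 _ _)

end SPlane

open SPlane

theorem forced_coefficient_conditions_general (q A B F11 F12 F21 F22 : ℂ)
    -- d applied to xθ = qθx : dx·θ + x·dθ = q(dθ·x − θ·dx)
    (hd1 : sπ q A B F11 F12 F21 F22 (ι ℂ 2) * sπ q A B F11 F12 F21 F22 (ι ℂ 1) +
        sπ q A B F11 F12 F21 F22 (ι ℂ 0) * sπ q A B F11 F12 F21 F22 (ι ℂ 3) =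
      q • (sπ q A B F11 F12 F21 F22 (ι ℂ 3) * sπ q A B F11 F12 F21 F22 (ι ℂ 0)) -
        q • (sπ q A B F11 F12 F21 F22 (ι ℂ 1) * sπ q A B F11 F12 F21 F22 (ι ℂ 2)))
    -- d applied to θ² = 0 : dθ·θ − θ·dθ = 0
    (hd2 : sπ q A B F11 F12 F21 F22 (ι ℂ 3) * sπ q A B F11 F12 F21 F22 (ι ℂ 1) -
        sπ q A B F11 F12 F21 F22 (ι ℂ 1) * sπ q A B F11 F12 F21 F22 (ι ℂ 3) = 0) :
    F11 + q * F22 = q ∧ F12 + q * F21 = -1 ∧ B = 1 := by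
  rw [x_mul_dθ, θ_mul_dx] at hd1
  rw [θ_mul_dθ] at hd2
  have hrel := Fintype.linearIndependent_iff.mp
    (linearIndependent_dxθ_dθx_dθθ q A B F11 F12 F21 F22)
    ![1 + F12 + q * F21, F11 + q * F22 - q, 1 - B]
    (by
      simp only [Fin.sum_univ_three, cons_val]
      linear_combination (norm := module) hd1 + hd2)
  obtain ⟨h_dxθ, h_dθx, h_dθθ⟩ :
      1 + F12 + q * F21 = 0 ∧ F11 + q * F22 - q = 0 ∧ 1 - B = 0 :=
    ⟨hrel 0, hrel 1, hrel 2⟩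
  exact ⟨by linear_combination h_dθx, by linear_combination h_dxθ, by linear_combination -h_dθθ⟩

theorem forced_coefficient_conditions (q A B F11 F12 F21 F22 : ℂ) (hq : q ≠ 0)
    -- d applied to xθ = qθx : dx·θ + x·dθ = q(dθ·x − θ·dx)
    (hd1 : sπ q A B F11 F12 F21 F22 (ι ℂ 2) * sπ q A B F11 F12 F21 F22 (ι ℂ 1) +
        sπ q A B F11 F12 F21 F22 (ι ℂ 0) * sπ q A B F11 F12 F21 F22 (ι ℂ 3) =
      q • (sπ q A B F11 F12 F21 F22 (ι ℂ 3) * sπ q A B F11 F12 F21 F22 (ι ℂ 0)) -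
        q • (sπ q A B F11 F12 F21 F22 (ι ℂ 1) * sπ q A B F11 F12 F21 F22 (ι ℂ 2)))
    -- d applied to θ² = 0 : dθ·θ − θ·dθ = 0
    (hd2 : sπ q A B F11 F12 F21 F22 (ι ℂ 3) * sπ q A B F11 F12 F21 F22 (ι ℂ 1) -
        sπ q A B F11 F12 F21 F22 (ι ℂ 1) * sπ q A B F11 F12 F21 F22 (ι ℂ 3) = 0) :
    F11 + q * F22 = q ∧ F12 + q * F21 = -1 ∧ B = 1 :=
  forced_coefficient_conditions_general q A B F11 F12 F21 F22 hd1 hd2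
end
end

section
/- Define Δ̂_R on differentials by Δ̂_R(dx) = dx⊗x and Δ̂_R(dθ) = dθ⊗x + dx⊗θ, and on mixed products by φ_R(u·dv) = Δ(u)·Δ̂_R(dv). Then φ_R preserves the Family I relations: e.g., Δ(x)Δ̂_R(dx) = p Δ̂_R(dx)Δ(x) and Δ(θ)Δ̂_R(dx) = -q⁻¹ Δ̂_R(dx)Δ(θ) + (1-p) Δ̂_R(dθ)Δ(x) hold in Γ⊗A, given p = q⁻². -/
/-! Every product Δ(u)·Δ̂_R(dv) of the relations is reordered so that all first-leg factors stand
to the left of all second-leg factors: moving a second-leg generator past a first-leg one costs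
the Koszul sign, and `x θ = q θ x` in the second leg reorders `x₂ θ₂`. In this normal form the
relations (11a) of the first leg finish the computation; in the θ-relation the factor `q` produced
by `x₂ θ₂` cancels the `q⁻¹` of the right-hand side. -/

theorem mul_mul_mul_eq_smul_of_commute {R T : Type*} [Semigroup T] [SMul R T]
    [IsScalarTower R T T] {r : R} {a b c : T} (hab : a * b = r • (b * a)) (hca : Commute c a)
    (hcb : Commute c b) : a * c * (b * c) = r • (b * c * (a * c)) := by
  rw [hcb.mul_mul_mul_comm, hab, smul_mul_assoc, hca.mul_mul_mul_comm]

theorem mul_mul_mul_comm_of_mul_eq_neg {T : Type*} [Ring T] {b c : T} (h : b * c = -(c * b))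
    (a d : T) : a * b * (c * d) = -(a * c * (b * d)) := by
  rw [mul_assoc a b, ← mul_assoc b, h, neg_mul, mul_neg, ← mul_assoc, ← mul_assoc,
    mul_assoc (a * c)]

theorem delta_theta_mul_deltaR_dx {K T : Type*} [Field K] [Ring T] [Algebra K T] {p q : K}
    (hq : q ≠ 0)
    {x₁ θ₁ dx₁ dθ₁ x₂ θ₂ : T}
    (g3 : x₁ * dx₁ = p • (dx₁ * x₁))
    (g5 : θ₁ * dx₁ = -(q⁻¹ • (dx₁ * θ₁)) + (1 - p) • (dθ₁ * x₁))
    (a1 : x₂ * θ₂ = q • (θ₂ * x₂))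
    (c1 : Commute x₂ x₁) (c2 : Commute x₂ θ₁) (c3 : Commute x₂ dx₁) (c5 : Commute θ₂ x₁)
    (c8 : θ₂ * dx₁ = -(dx₁ * θ₂)) :
    (θ₁ * x₂ + x₁ * θ₂) * (dx₁ * x₂) =
      -(q⁻¹ • ((dx₁ * x₂) * (θ₁ * x₂ + x₁ * θ₂))) +
        (1 - p) • ((dθ₁ * x₂ + dx₁ * θ₂) * (x₁ * x₂)) := by
  simp only [add_mul, mul_add, c3.mul_mul_mul_comm, c2.mul_mul_mul_comm, c1.mul_mul_mul_comm,
    c5.mul_mul_mul_comm, mul_mul_mul_comm_of_mul_eq_neg c8]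
  rw [g3, g5, a1]
  simp only [add_mul, neg_mul, smul_mul_assoc, mul_smul_comm]
  match_scalars <;> field_simp
  ring

theorem phiR_preserves_familyI_general (p q : ℂ) (hq : q ≠ 0)
    {T : Type*} [Ring T] [Algebra ℂ T]
    (x₁ θ₁ dx₁ dθ₁ x₂ θ₂ : T)
    -- (11a)
    (g3 : x₁ * dx₁ = p • (dx₁ * x₁))
    (g5 : θ₁ * dx₁ = -(q⁻¹ • (dx₁ * θ₁)) + (1 - p) • (dθ₁ * x₁))
    -- relations of A in the second leg: (1)
    (a1 : x₂ * θ₂ = q • (θ₂ * x₂))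
    -- Koszul sign cross relations: x₂ (even) commutes with the first leg
    (c1 : x₂ * x₁ = x₁ * x₂) (c2 : x₂ * θ₁ = θ₁ * x₂)
    (c3 : x₂ * dx₁ = dx₁ * x₂)
    -- θ₂ (odd) commutes with even, anticommutes with odd first-leg generators
    (c5 : θ₂ * x₁ = x₁ * θ₂)
    (c8 : θ₂ * dx₁ = -(dx₁ * θ₂)) :
    -- Δ(x)·Δ̂_R(dx) = p Δ̂_R(dx)·Δ(x)
    (x₁ * x₂) * (dx₁ * x₂) = p • ((dx₁ * x₂) * (x₁ * x₂)) ∧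
    -- Δ(θ)·Δ̂_R(dx) = -q⁻¹ Δ̂_R(dx)·Δ(θ) + (1-p) Δ̂_R(dθ)·Δ(x)
    (θ₁ * x₂ + x₁ * θ₂) * (dx₁ * x₂) =
      -(q⁻¹ • ((dx₁ * x₂) * (θ₁ * x₂ + x₁ * θ₂))) +
        (1 - p) • ((dθ₁ * x₂ + dx₁ * θ₂) * (x₁ * x₂)) :=
  ⟨mul_mul_mul_eq_smul_of_commute g3 c1 c3, delta_theta_mul_deltaR_dx hq g3 g5 a1 c1 c2 c3 c5 c8⟩

theorem phiR_preserves_familyI (p q : ℂ) (hp : p ≠ 0) (hq : q ≠ 0) (hpq : p = q⁻¹ ^ 2)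
    {T : Type*} [Ring T] [Algebra ℂ T]
    (x₁ θ₁ dx₁ dθ₁ x₂ θ₂ : T)
    -- relations of Γ in the first leg: (1)
    (g1 : x₁ * θ₁ = q • (θ₁ * x₁)) (g2 : θ₁ * θ₁ = 0)
    -- (11a)
    (g3 : x₁ * dx₁ = p • (dx₁ * x₁))
    (g4 : x₁ * dθ₁ = (p * q) • (dθ₁ * x₁))
    (g5 : θ₁ * dx₁ = -(q⁻¹ • (dx₁ * θ₁)) + (1 - p) • (dθ₁ * x₁))
    (g6 : θ₁ * dθ₁ = dθ₁ * θ₁)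
    -- (12a)
    (g7 : dx₁ * dx₁ = 0) (g8 : dx₁ * dθ₁ = (p * q) • (dθ₁ * dx₁))
    -- relations of A in the second leg: (1)
    (a1 : x₂ * θ₂ = q • (θ₂ * x₂)) (a2 : θ₂ * θ₂ = 0)
    -- Koszul sign cross relations: x₂ (even) commutes with the first leg
    (c1 : x₂ * x₁ = x₁ * x₂) (c2 : x₂ * θ₁ = θ₁ * x₂)
    (c3 : x₂ * dx₁ = dx₁ * x₂) (c4 : x₂ * dθ₁ = dθ₁ * x₂)
    -- θ₂ (odd) commutes with even, anticommutes with odd first-leg generators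
    (c5 : θ₂ * x₁ = x₁ * θ₂) (c6 : θ₂ * dθ₁ = dθ₁ * θ₂)
    (c7 : θ₂ * θ₁ = -(θ₁ * θ₂)) (c8 : θ₂ * dx₁ = -(dx₁ * θ₂)) :
    -- Δ(x)·Δ̂_R(dx) = p Δ̂_R(dx)·Δ(x)
    (x₁ * x₂) * (dx₁ * x₂) = p • ((dx₁ * x₂) * (x₁ * x₂)) ∧
    -- Δ(θ)·Δ̂_R(dx) = -q⁻¹ Δ̂_R(dx)·Δ(θ) + (1-p) Δ̂_R(dθ)·Δ(x)
    (θ₁ * x₂ + x₁ * θ₂) * (dx₁ * x₂) =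
      -(q⁻¹ • ((dx₁ * x₂) * (θ₁ * x₂ + x₁ * θ₂))) +
        (1 - p) • ((dθ₁ * x₂ + dx₁ * θ₂) * (x₁ * x₂)) :=
  phiR_preserves_familyI_general p q hq x₁ θ₁ dx₁ dθ₁ x₂ θ₂ g3 g5 a1 c1 c2 c3 c5 c8
end

section
/- In the Family I calculus, the forms w = dx·x⁻¹ and u = dθ·x⁻¹ - dx·x⁻¹θx⁻¹ satisfy w² = 0 and wu = uw. -/
/-! Conjugation by `x⁻¹` rescales each of `dx`, `dθ`, `θ` by a nonzero scalar, so every product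
of the forms can be brought to the normal order `dθ dx x⁻²` (or `dx dx …`, which vanishes). The
only relation that produces a new term is (11a) for `θ dx`; inside `dx θ dx` its first summand
dies by `dx² = 0`, and the surviving `(1 - p)` term is exactly what makes `wu = uw`. -/

section SkewCommutation

variable {K A : Type*} [Semifield K] [Semiring A] [Algebra K A]

theorem inv_mul_eq_smul_mul_inv_of_mul_eq_smul {x y a : A} {c : K}
    (hxy : x * y = 1) (hyx : y * x = 1) (hc : c ≠ 0) (h : x * a = c • (a * x)) :
    y * a = c⁻¹ • (a * y) := by
  have h' : a * y = c • (y * a) :=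
    calc a * y = y * (x * a) * y := by rw [← mul_assoc, hyx, one_mul]
      _ = c • (y * (a * (x * y))) := by rw [h]; simp only [mul_smul_comm, smul_mul_assoc, mul_assoc]
      _ = c • (y * a) := by rw [hxy, mul_one]
  rw [h', smul_smul, inv_mul_cancel₀ hc, one_smul]

theorem mul_mul_mul_eq_smul_of_mul_eq_smul {a b y : A} {c : K} (h : y * b = c • (b * y)) :
    a * y * (b * y) = c • (a * b * (y * y)) := by
  rw [← mul_assoc, mul_assoc a, h]
  simp only [mul_smul_comm, smul_mul_assoc, mul_assoc]

end SkewCommutation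

section FamilyI

variable {K A : Type*} [Field K] [Ring A] [Algebra K A]

theorem dx_mul_theta_mul_dx {p q : K} {θ dx dθ x : A}
    (r5 : θ * dx = -(q⁻¹ • (dx * θ)) + (1 - p) • (dθ * x))
    (r7 : dx * dx = 0) (r8 : dx * dθ = (p * q) • (dθ * dx)) :
    dx * θ * dx = ((1 - p) * (p * q)) • (dθ * dx * x) := by
  rw [mul_assoc, r5, mul_add, mul_neg, mul_smul_comm, ← mul_assoc dx dx, r7, zero_mul, smul_zero,
    neg_zero, zero_add, mul_smul_comm, ← mul_assoc, r8]
  simp only [smul_mul_assoc, smul_smul]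

theorem dx_mul_inv_mul_theta_mul_dx {p q : K} (hp : p ≠ 0) (hq : q ≠ 0) {θ dx dθ x y : A}
    (hxy : x * y = 1) (c1 : y * dx = p⁻¹ • (dx * y)) (c3 : y * θ = q⁻¹ • (θ * y))
    (r5 : θ * dx = -(q⁻¹ • (dx * θ)) + (1 - p) • (dθ * x))
    (r7 : dx * dx = 0) (r8 : dx * dθ = (p * q) • (dθ * dx)) :
    dx * y * θ * dx = (1 - p) • (dθ * dx) :=
  calc dx * y * θ * dx = (q⁻¹ * p⁻¹) • (dx * θ * dx * y) := by
        rw [mul_assoc dx y, c3]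
        simp only [mul_smul_comm, smul_mul_assoc, mul_assoc]
        rw [c1]
        simp only [mul_smul_comm, smul_smul]
    _ = (1 - p) • (dθ * dx) := by
        rw [dx_mul_theta_mul_dx r5 r7 r8, smul_mul_assoc, smul_smul, mul_assoc (dθ * dx), hxy,
          mul_one]
        congr 1
        field_simp

end FamilyI

theorem cartan_forms_relations_general (p q : ℂ) (hp : p ≠ 0) (hq : q ≠ 0)
    {Γ : Type*} [Ring Γ] [Algebra ℂ Γ]
    (x xinv θ dx dθ : Γ)
    (hx1 : x * xinv = 1) (hx2 : xinv * x = 1)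
    -- quantum superplane relations (1)
    (r1 : x * θ = q • (θ * x))
    -- Family I relations (11a)
    (r3 : x * dx = p • (dx * x))
    (r4 : x * dθ = (p * q) • (dθ * x))
    (r5 : θ * dx = -(q⁻¹ • (dx * θ)) + (1 - p) • (dθ * x))
    -- Family I relations (12a)
    (r7 : dx * dx = 0) (r8 : dx * dθ = (p * q) • (dθ * dx)) :
    (dx * xinv) * (dx * xinv) = 0 ∧
    (dx * xinv) * (dθ * xinv - dx * xinv * θ * xinv) =
      (dθ * xinv - dx * xinv * θ * xinv) * (dx * xinv) := by
  have c1 := inv_mul_eq_smul_mul_inv_of_mul_eq_smul hx1 hx2 hp r3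
  have c2 := inv_mul_eq_smul_mul_inv_of_mul_eq_smul hx1 hx2 (mul_ne_zero hp hq) r4
  have c3 := inv_mul_eq_smul_mul_inv_of_mul_eq_smul hx1 hx2 hq r1
  have w_sq : dx * xinv * (dx * xinv) = 0 := by
    rw [mul_mul_mul_eq_smul_of_mul_eq_smul c1, r7, zero_mul, smul_zero]
  have w_dθ : dx * xinv * (dθ * xinv) = dθ * dx * (xinv * xinv) := by
    rw [mul_mul_mul_eq_smul_of_mul_eq_smul c2, r8, smul_mul_assoc, smul_smul,
      inv_mul_cancel₀ (mul_ne_zero hp hq), one_smul]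
  have dθ_w : dθ * xinv * (dx * xinv) = p⁻¹ • (dθ * dx * (xinv * xinv)) :=
    mul_mul_mul_eq_smul_of_mul_eq_smul c1
  have θ_w : dx * xinv * θ * xinv * (dx * xinv) = (p⁻¹ * (1 - p)) • (dθ * dx * (xinv * xinv)) := by
    rw [mul_mul_mul_eq_smul_of_mul_eq_smul c1,
      dx_mul_inv_mul_theta_mul_dx hp hq hx1 c1 c3 r5 r7 r8, smul_mul_assoc, smul_smul]
  refine ⟨w_sq, ?_⟩
  calc dx * xinv * (dθ * xinv - dx * xinv * θ * xinv)
      = dθ * dx * (xinv * xinv) := by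
        rw [mul_sub, w_dθ, show dx * xinv * (dx * xinv * θ * xinv) =
          dx * xinv * (dx * xinv) * (θ * xinv) by simp only [mul_assoc], w_sq, zero_mul, sub_zero]
    _ = p⁻¹ • (dθ * dx * (xinv * xinv)) - (p⁻¹ * (1 - p)) • (dθ * dx * (xinv * xinv)) := by
        rw [← sub_smul, show p⁻¹ - p⁻¹ * (1 - p) = 1 by field_simp; ring, one_smul]
    _ = (dθ * xinv - dx * xinv * θ * xinv) * (dx * xinv) := by
        rw [sub_mul, dθ_w, θ_w]

theorem cartan_forms_relations (p q : ℂ) (hp : p ≠ 0) (hq : q ≠ 0)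
    {Γ : Type*} [Ring Γ] [Algebra ℂ Γ]
    (x xinv θ dx dθ : Γ)
    (hx1 : x * xinv = 1) (hx2 : xinv * x = 1)
    -- quantum superplane relations (1)
    (r1 : x * θ = q • (θ * x)) (r2 : θ * θ = 0)
    -- Family I relations (11a)
    (r3 : x * dx = p • (dx * x))
    (r4 : x * dθ = (p * q) • (dθ * x))
    (r5 : θ * dx = -(q⁻¹ • (dx * θ)) + (1 - p) • (dθ * x))
    (r6 : θ * dθ = dθ * θ)
    -- Family I relations (12a)
    (r7 : dx * dx = 0) (r8 : dx * dθ = (p * q) • (dθ * dx)) :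
    (dx * xinv) * (dx * xinv) = 0 ∧
    (dx * xinv) * (dθ * xinv - dx * xinv * θ * xinv) =
      (dθ * xinv - dx * xinv * θ * xinv) * (dx * xinv) :=
  cartan_forms_relations_general p q hp hq x xinv θ dx dθ hx1 hx2 r1 r3 r4 r5 r7 r8
end
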